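/- If g ≤ 2 then Δ_k(X) = 0 for every k ≥ 3, while if g ≥ 3 then Δ_4(X) ≠ 0. Hence the A∞-coalgebra structure on the mod-2 homology of a closed compact unorientable surface of genus g has non-trivial higher order structure if and only if g ≥ 3. -/
import Mathlib


noncomputable section

/-- Generators of the mod-2 chains/homology of the connected sum of `g` real projective
planes: the vertex `v` (degree 0), edges `e i` modelling `e_{i+1}` (degree 1, 0-based
indices), and the 2-dimensional class `X` (degree 2). -/
inductive UCell (g : ℕ) : Type where
  | v : UCell g
  | e : Fin g → UCell g
  | X : UCell g
deriving DecidableEq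

/-- `TU g k` models `M^{⊗k}`: the free `ℤ/2ℤ`-module on `k`-tuples of generators. -/
abbrev TU (g k : ℕ) : Type := (Fin k → UCell g) →₀ ZMod 2

/-- The `A_∞`-coalgebra operations on the generators: `Δ₂(v) = v ⊗ v`,
`Δ₂(e_i) = v ⊗ e_i + e_i ⊗ v`, `Δ₂(X) = v ⊗ X + X ⊗ v + Σ_{i=1}^{g} e_i ⊗ e_i`; for `k ≥ 3`,
`Δ_k` vanishes on `v` and on each `e_i` and, with `i_p = 2⌊(p+1)/2⌋ − 1` and
`j_q = 2⌊(q+1)/2⌋`,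
`Δ_k(X) = Σ_{1≤p₁<⋯<p_k≤2⌈g/2⌉} e_{i_{p₁}} ⊗ ⋯ ⊗ e_{i_{p_k}}
        + Σ_{1≤q₁<⋯<q_k≤2⌊g/2⌋} e_{j_{q₁}} ⊗ ⋯ ⊗ e_{j_{q_k}}`
(below the `p`'s and `q`'s are 0-based, which shifts the sequence formulas by one, and the
resulting 1-based edge indices are converted to 0-based ones). -/
def DeltaUB (g : ℕ) (k : ℕ) : UCell g → TU g k
  | .v => if k = 2 then Finsupp.single (fun _ => UCell.v) 1 else 0
  | .e i =>
      if k = 2 then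
        Finsupp.single (fun p : Fin k => if (p : ℕ) = 0 then UCell.v else UCell.e i) 1 +
          Finsupp.single (fun p : Fin k => if (p : ℕ) = 0 then UCell.e i else UCell.v) 1
      else 0
  | .X =>
      if k = 2 then
        Finsupp.single (fun p : Fin k => if (p : ℕ) = 0 then UCell.v else UCell.X) 1 +
          Finsupp.single (fun p : Fin k => if (p : ℕ) = 0 then UCell.X else UCell.v) 1 +
          ∑ i : Fin g, Finsupp.single (fun _ : Fin k => UCell.e i) 1
      else
        (∑ f : Fin k → Fin (2 * ((g + 1) / 2)),
          if ∀ a b : Fin k, a < b → f a < f b then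
            Finsupp.single (fun q : Fin k =>
              UCell.e ⟨2 * (((f q : ℕ) + 2) / 2) - 2, by have := (f q).isLt; omega⟩) 1
          else 0) +
        (∑ f : Fin k → Fin (2 * (g / 2)),
          if ∀ a b : Fin k, a < b → f a < f b then
            Finsupp.single (fun q : Fin k =>
              UCell.e ⟨2 * (((f q : ℕ) + 2) / 2) - 1, by have := (f q).isLt; omega⟩) 1
          else 0)

/-- Splicing a `j`-tuple into a `k`-tuple at position `a`, producing an `m`-tuple
(meaningful when `m = k + j - 1` and `a < k`). -/
def spliceU {g k j : ℕ} (m a : ℕ) (x : Fin k → UCell g) (y : Fin j → UCell g) :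
    Fin m → UCell g := fun q =>
  if h1 : (q : ℕ) < a ∧ (q : ℕ) < k then x ⟨q, h1.2⟩
  else if h2 : a ≤ (q : ℕ) ∧ (q : ℕ) - a < j then y ⟨(q : ℕ) - a, h2.2⟩
  else if h3 : (q : ℕ) + 1 - j < k then x ⟨(q : ℕ) + 1 - j, h3⟩
  else UCell.v

/-- `oppU g k m j a D` is the linear map `1^{⊗a} ⊗ D ⊗ 1^{⊗(k-1-a)} : M^{⊗k} → M^{⊗m}`
(meaningful when `m = k + j - 1`), where `D` is the basis-level description of an operation
`M → M^{⊗j}`; over `ℤ/2ℤ` Koszul signs are irrelevant. -/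
def oppU (g k m j a : ℕ) (D : UCell g → TU g j) : TU g k →ₗ[ZMod 2] TU g m :=
  Finsupp.linearCombination (ZMod 2) fun x : Fin k → UCell g =>
    if ha : a < k then Finsupp.mapDomain (spliceU m a x) (D (x ⟨a, ha⟩)) else 0

/-- `Δ_k` as a linear map `M → M^{⊗k}`. -/
def DmapU (g k : ℕ) : TU g 1 →ₗ[ZMod 2] TU g k :=
  Finsupp.linearCombination (ZMod 2) fun x : Fin 1 → UCell g => DeltaUB g k (x 0)

end

/-- If `g ≤ 2` then `Δ_k(X) = 0` for every `k ≥ 3`, while if `g ≥ 3` then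
`Δ₄(X) ≠ 0`. Hence the `A_∞`-coalgebra structure on the mod-2 homology of a closed compact
unorientable surface of genus `g` has non-trivial higher order structure iff `g ≥ 3`. -/
theorem unorientable_surface_higher_structure (g : ℕ) (hg : 1 ≤ g) :
    (g ≤ 2 → ∀ k : ℕ, 3 ≤ k → DeltaUB g k UCell.X = 0) ∧
    (3 ≤ g → DeltaUB g 4 UCell.X ≠ 0) := by
  constructor
  · intro hg2 k hk
    have hk2 : k ≠ 2 := by omega
    simp only [DeltaUB, if_neg hk2]
    have key : ∀ n : ℕ, n < k → ∀ F : (Fin k → Fin n) → TU g k,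
        (∑ f : Fin k → Fin n,
          if ∀ a b : Fin k, a < b → f a < f b then F f else 0) = 0 := by
      intro n hn F
      apply Finset.sum_eq_zero
      intro f _
      rw [if_neg]
      intro hmono
      have hinj : Function.Injective f := by
        intro a b hab
        rcases lt_trichotomy a b with h | h | h
        · exact absurd hab (hmono a b h).ne
        · exact h
        · exact absurd hab.symm (hmono b a h).ne
      have := Fintype.card_le_of_injective f hinj
      simp only [Fintype.card_fin] at this
      omega
    rw [key _ (by omega) _, key _ (by omega) _, add_zero]
  · intro hg3 h
    have hx0 : ∀ q : Fin 4, 2 * ((q : ℕ) / 2) < g := fun q => by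
      have := q.isLt; omega
    set x0 : Fin 4 → UCell g := fun q => UCell.e ⟨2 * ((q : ℕ) / 2), hx0 q⟩ with hx0def
    have hh := DFunLike.congr_fun h x0
    have hn1 : (4 : ℕ) ≤ 2 * ((g + 1) / 2) := by omega
    set f0 : Fin 4 → Fin (2 * ((g + 1) / 2)) := fun q => ⟨(q : ℕ), by have := q.isLt; omega⟩
      with hf0def
    rw [show (DeltaUB g 4 UCell.X) x0 = 1 from ?_] at hh
    · exact one_ne_zero hh
    simp only [DeltaUB, if_neg (by norm_num : (4 : ℕ) ≠ 2)]
    rw [Finsupp.add_apply, Finsupp.finset_sum_apply, Finsupp.finset_sum_apply]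
    have h1 : (∑ f : Fin 4 → Fin (2 * ((g + 1) / 2)),
        ((if ∀ a b : Fin 4, a < b → f a < f b then
            Finsupp.single (fun q : Fin 4 =>
              UCell.e ⟨2 * (((f q : ℕ) + 2) / 2) - 2, by have := (f q).isLt; omega⟩) 1
          else 0) : TU g 4) x0) = 1 := by
      have : ∀ f : Fin 4 → Fin (2 * ((g + 1) / 2)),
          ((if ∀ a b : Fin 4, a < b → f a < f b then
              Finsupp.single (fun q : Fin 4 =>
                UCell.e ⟨2 * (((f q : ℕ) + 2) / 2) - 2, by have := (f q).isLt; omega⟩) 1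
            else 0) : TU g 4) x0 = if f = f0 then 1 else 0 := by
        intro f
        by_cases hf : f = f0
        · subst hf
          rw [if_pos, Finsupp.single_apply, if_pos, if_pos rfl]
          · funext q
            show UCell.e _ = UCell.e _
            congr 1
            apply Fin.ext
            show 2 * (((q : ℕ) + 2) / 2) - 2 = 2 * ((q : ℕ) / 2)
            omega
          · intro a b hab
            exact hab
        · rw [if_neg hf]
          by_cases hm : ∀ a b : Fin 4, a < b → f a < f b
          · rw [if_pos hm, Finsupp.single_apply, if_neg]
            intro heq
            apply hf
            have e0 := congrFun heq 0
            have e1 := congrFun heq 1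
            have e2 := congrFun heq 2
            have e3 := congrFun heq 3
            simp only [hx0def, UCell.e.injEq, Fin.mk.injEq] at e0 e1 e2 e3
            have m01 : (f 0 : ℕ) < (f 1 : ℕ) := hm 0 1 (by decide)
            have m12 : (f 1 : ℕ) < (f 2 : ℕ) := hm 1 2 (by decide)
            have m23 : (f 2 : ℕ) < (f 3 : ℕ) := hm 2 3 (by decide)
            have v0 : (f 0 : ℕ) = 0 := by omega
            have v1 : (f 1 : ℕ) = 1 := by omega
            have v2 : (f 2 : ℕ) = 2 := by omega
            have v3 : (f 3 : ℕ) = 3 := by omega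
            funext q
            fin_cases q <;> exact Fin.ext (by simpa [hf0def] using by assumption)
          · simp [hm, hf]
      rw [Finset.sum_congr rfl fun f _ => this f, Finset.sum_ite_eq' Finset.univ f0]
      simp
    have h2 : (∑ f : Fin 4 → Fin (2 * (g / 2)),
        ((if ∀ a b : Fin 4, a < b → f a < f b then
            Finsupp.single (fun q : Fin 4 =>
              UCell.e ⟨2 * (((f q : ℕ) + 2) / 2) - 1, by have := (f q).isLt; omega⟩) 1
          else 0) : TU g 4) x0) = 0 := by
      apply Finset.sum_eq_zero
      intro f _
      by_cases hm : ∀ a b : Fin 4, a < b → f a < f b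
      · rw [if_pos hm, Finsupp.single_apply, if_neg]
        intro heq
        have e0 := congrFun heq 0
        simp only [hx0def, UCell.e.injEq, Fin.mk.injEq] at e0
        omega
      · rw [if_neg hm, Finsupp.coe_zero, Pi.zero_apply]
    rw [h1, h2, add_zero]
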